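/- arXiv:1509.01191 — 7 statements merged into one kernel-verified Lean document; each statement's English description precedes it below -/
import Mathlib

section
/- If A ⊆ D and there exists f ∈ F with A = f⁻¹(X) for some X ⊆ ran(f), then the filter U derived from #(D,F) measures A: either A ∈ U or D \ A ∈ U. -/
/-!
A common upper bound `g ∈ F` of `f*` and `f` factors through `f`, so each fibre of `g`, in
particular `g⁻¹{i_g}`, lies inside a single fibre of `f`, hence inside `f⁻¹(X)` or its complement.
-/

open scoped symmDiff

/-- The ordering on functions with domain `D`: `f₁ ≤ f₂` iff there is
`e : ι → ι` with `f₁ = e ∘ f₂`. -/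
def FLe {D ι : Type} (f₁ f₂ : D → ι) : Prop := ∃ e : ι → ι, f₁ = e ∘ f₂

/-- The cone `⌊d⌋ = {d' ∈ D : d ◁ d'}`. -/
def cone {D : Type} (lt : D → D → Prop) (d : D) : Set D := {d' | lt d d'}

/-- `ran*(f) = ⋂_{d ∈ D} ran (f ↾ ⌊d⌋)`. -/
def ranStar {D ι : Type} (lt : D → D → Prop) (f : D → ι) : Set ι :=
  ⋂ d : D, f '' cone lt d

/-- `fs` (playing the role of `f*`) and the finite sets `u f` witness `#(D, F)`. -/
def HashWitness {D ι : Type} (lt : D → D → Prop) (F : Set (D → ι))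
    (fs : D → ι) (u : (D → ι) → Finset ι) : Prop :=
  fs ∈ F ∧ ∀ f ∈ F, FLe fs f →
    (u f).Nonempty ∧ ↑(u f) ⊆ ranStar lt f ∧
      ∀ e : ι → ι, fs = e ∘ f → Set.BijOn e ↑(u f) ↑(u fs)

/-- The combinatorial principle `#(D, F)`. -/
def Hash {D ι : Type} (lt : D → D → Prop) (F : Set (D → ι)) : Prop :=
  ∃ fs u, HashWitness lt F fs u

/-- The filter `U` derived from a witness of `#(D, F)` together with a coherent
choice `i f ∈ u f`:  `A ∈ U` iff there are `d ∈ D` and `f ∈ F` with `f ≥ f*`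
such that `f⁻¹{i_f} ∩ ⌊d⌋ ⊆ A`. -/
def Ufilter {D ι : Type} (lt : D → D → Prop) (F : Set (D → ι))
    (fs : D → ι) (i : (D → ι) → ι) : Set (Set D) :=
  {A | ∃ d : D, ∃ f ∈ F, FLe fs f ∧ f ⁻¹' {i f} ∩ cone lt d ⊆ A}

theorem FLe.preimage_singleton_subset_or {D ι : Type} {f g : D → ι} (hfg : FLe f g) (j : ι)
    (X : Set ι) : g ⁻¹' {j} ⊆ f ⁻¹' X ∨ g ⁻¹' {j} ⊆ (f ⁻¹' X)ᶜ := by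
  obtain ⟨e, rfl⟩ := hfg
  by_cases hj : e j ∈ X
  · left
    rintro d rfl
    exact hj
  · right
    rintro d rfl
    exact hj

theorem mem_Ufilter_of_preimage_subset {D ι : Type} [Nonempty D] {lt : D → D → Prop}
    {F : Set (D → ι)} {fs g : D → ι} {i : (D → ι) → ι} {A : Set D} (hg : g ∈ F)
    (hfsg : FLe fs g) (hA : g ⁻¹' {i g} ⊆ A) : A ∈ Ufilter lt F fs i :=
  ⟨Classical.arbitrary D, g, hg, hfsg, Set.inter_subset_left.trans hA⟩

theorem stmt_2_general {D ι : Type} [Nonempty D] (lt : D → D → Prop)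
    (F : Set (D → ι))
    (hdirF : ∀ f₁ ∈ F, ∀ f₂ ∈ F, ∃ f₃ ∈ F, FLe f₁ f₃ ∧ FLe f₂ f₃)
    (fs : D → ι) (u : (D → ι) → Finset ι) (hw : HashWitness lt F fs u)
    (i : (D → ι) → ι)
    (A : Set D)
    (hA : ∃ f ∈ F, ∃ X : Set ι, X ⊆ Set.range f ∧ A = f ⁻¹' X) :
    A ∈ Ufilter lt F fs i ∨ Aᶜ ∈ Ufilter lt F fs i := by
  obtain ⟨f, hf, X, -, rfl⟩ := hA
  obtain ⟨g, hg, hfsg, hfg⟩ := hdirF fs hw.1 f hf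
  exact (hfg.preimage_singleton_subset_or (i g) X).imp
    (mem_Ufilter_of_preimage_subset hg hfsg) (mem_Ufilter_of_preimage_subset hg hfsg)

/-- if `A = f⁻¹(X)` for some `f ∈ F` and `X ⊆ ran f`, then the filter
`U` derived from `#(D, F)` measures `A`. -/
theorem stmt_2 {D ι : Type} [Nonempty D] (lt : D → D → Prop)
    (hirr : ∀ d, ¬ lt d d) (htrans : ∀ a b c, lt a b → lt b c → lt a c)
    (hdirD : ∀ d₁ d₂ : D, ∃ d₃, lt d₁ d₃ ∧ lt d₂ d₃)
    (F : Set (D → ι))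
    (hdirF : ∀ f₁ ∈ F, ∀ f₂ ∈ F, ∃ f₃ ∈ F, FLe f₁ f₃ ∧ FLe f₂ f₃)
    (fs : D → ι) (u : (D → ι) → Finset ι) (hw : HashWitness lt F fs u)
    (i : (D → ι) → ι)
    (hi : ∀ f ∈ F, FLe fs f →
      i f ∈ u f ∧ ∀ e : ι → ι, fs = e ∘ f → e (i f) = i fs)
    (A : Set D)
    (hA : ∃ f ∈ F, ∃ X : Set ι, X ⊆ Set.range f ∧ A = f ⁻¹' X) :
    A ∈ Ufilter lt F fs i ∨ Aᶜ ∈ Ufilter lt F fs i :=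
  stmt_2_general lt F hdirF fs u hw i A hA
end

section
/- In the structure H₁ over index domain D, two elements (f,d,u) and (f',d',u') are E-equivalent if and only if: they are E'-equivalent (i.e., f = f' and d = d'), the parity predicate P holds at one iff it holds at the other, and for every finite v ⊆ X the difference predicate D_v holds at one iff it holds at the other. -/
open scoped symmDiff

/-- Elements of the structure `H₁`: triples `(f, d, u)` with `f` a function on `D`,
`d ∈ D` and `u` a finite subset of `ι` (which contains `X = ⋃ {ran f : f ∈ F}`). -/
abbrev Tri (D ι : Type) : Type := (D → ι) × D × Finset ι

/-- `ran (f ↾ ⌊d⌋)`. -/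
def ranAbove {D ι : Type} (lt : D → D → Prop) (f : D → ι) (d : D) : Set ι :=
  f '' cone lt d

/-- The parity predicate: `P(f,d,u)` iff `|u ∩ ran (f ↾ ⌊d⌋)|` is odd. -/
def Ppred {D ι : Type} (lt : D → D → Prop) (t : Tri D ι) : Prop :=
  Odd ((↑t.2.2 ∩ ranAbove lt t.1 t.2.1).ncard)

/-- The difference predicate: `D_v(f,d,u)` iff `u \ ran (f ↾ ⌊d⌋) ⊆ v` and
`v ∩ ran (f ↾ ⌊d⌋) = ∅`. -/
def Dpred {D ι : Type} (lt : D → D → Prop) (v : Finset ι) (t : Tri D ι) : Prop :=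
  (↑t.2.2 : Set ι) \ ranAbove lt t.1 t.2.1 ⊆ ↑v ∧
    (↑v : Set ι) ∩ ranAbove lt t.1 t.2.1 = ∅

/-- The equivalence relation `E`: `(f,d,u) E (f',d',u')` iff `(f,d) = (f',d')` and
there are `d₀, …, d_{2n-1} ∈ ⌊d⌋` with `u Δ {f d₀} Δ … Δ {f d_{2n-1}} = u'`. -/
def Erel {D ι : Type} [DecidableEq ι] (lt : D → D → Prop) (a b : Tri D ι) : Prop :=
  a.1 = b.1 ∧ a.2.1 = b.2.1 ∧
    ∃ l : List D, (∀ x ∈ l, lt a.2.1 x) ∧ Even l.length ∧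
      b.2.2 = l.foldl (fun w x => w ∆ ({a.1 x} : Finset ι)) a.2.2

/-- The relation `R`: `(f,d,u) R (f',d',u')` iff `f ≤ f'` and, for `e` witnessing
this, `u = {i : there are an odd number of j ∈ u' with e j = i}`. -/
def Rrel {D ι : Type} (a b : Tri D ι) : Prop :=
  FLe a.1 b.1 ∧ ∀ e : ι → ι, a.1 = e ∘ b.1 →
    (↑a.2.2 : Set ι) = {i | Odd ((↑b.2.2 ∩ e ⁻¹' {i}).ncard)}

/-- The action of the group `G` of finite sets: `F_c (f,d,u) = (f,d,u Δ c)`. -/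
def Fc {D ι : Type} [DecidableEq ι] (c : Finset ι) (t : Tri D ι) : Tri D ι :=
  (t.1, t.2.1, t.2.2 ∆ c)

/-!
Fix `f, d` and put `R = f '' ⌊d⌋`. Folding the singletons `{f dₖ}` into `u` replaces `u` by
`u ∆ c`, where `c ⊆ R` is the set of values hit an odd number of times, and `|c|` has the parity
of the length of the list; conversely every finite `c ⊆ R` is produced by a duplicate-free list
of preimages. Hence `u E u'` iff `c = u ∆ u'` is a subset of `R` of even size. Now `c ⊆ R` says
that `u` and `u'` agree outside `R`, which is exactly what the predicates `D_v` detect (test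
with `v = u \ R`), and given that, `|c|` is even iff `|u ∩ R|` and `|u' ∩ R|` have the same
parity, which is what `P` detects.
-/

open Finset

theorem Set.symmDiff_subset_iff_sdiff_eq {α : Type*} {s t r : Set α} :
    s ∆ t ⊆ r ↔ s \ r = t \ r := by
  simp only [Set.subset_def, Set.ext_iff, Set.mem_symmDiff, Set.mem_sdiff]
  refine forall_congr' fun i => ?_
  tauto

section SymmDiff

variable {ι : Type*} [DecidableEq ι]

theorem Finset.card_symmDiff_add_two_mul_card_inter (s t : Finset ι) :
    #(s ∆ t) + 2 * #(s ∩ t) = #s + #t := by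
  have hdisj : Disjoint (s ∆ t) (s ∩ t) := by
    rw [disjoint_left]
    intro i hi hi'
    simp only [mem_symmDiff, mem_inter] at hi hi'
    tauto
  have hunion : s ∆ t ∪ s ∩ t = s ∪ t := by
    ext i
    simp only [mem_union, mem_symmDiff, mem_inter]
    tauto
  have := card_union_of_disjoint hdisj
  rw [hunion] at this
  have := card_union_add_card_inter s t
  omega

theorem Finset.even_card_symmDiff_iff (s t : Finset ι) :
    Even #(s ∆ t) ↔ (Even #s ↔ Even #t) := by
  have h := card_symmDiff_add_two_mul_card_inter s t
  rw [← Nat.even_add, ← h, Nat.even_add]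
  simp

def symmDiffSingletons (m : List ι) : Finset ι := m.foldl (fun w i => w ∆ {i}) ∅

theorem foldl_symmDiff_singleton (m : List ι) (u : Finset ι) :
    m.foldl (fun w i => w ∆ {i}) u = u ∆ symmDiffSingletons m := by
  induction m generalizing u with
  | nil => rw [symmDiffSingletons, List.foldl_nil, List.foldl_nil, ← bot_eq_empty, symmDiff_bot]
  | cons i m ih =>
    rw [symmDiffSingletons, List.foldl_cons, List.foldl_cons, ih, ih, ← bot_eq_empty, bot_symmDiff,
      symmDiff_assoc]

theorem symmDiffSingletons_cons (i : ι) (m : List ι) :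
    symmDiffSingletons (i :: m) = {i} ∆ symmDiffSingletons m := by
  rw [symmDiffSingletons, List.foldl_cons, foldl_symmDiff_singleton, ← bot_eq_empty,
    bot_symmDiff]

theorem symmDiffSingletons_subset (m : List ι) : symmDiffSingletons m ⊆ m.toFinset := by
  induction m with
  | nil => simp [symmDiffSingletons]
  | cons i m ih =>
    rw [symmDiffSingletons_cons, List.toFinset_cons, insert_eq]
    exact symmDiff_subset_union.trans (union_subset_union subset_rfl ih)

theorem even_card_symmDiffSingletons_iff (m : List ι) :
    Even #(symmDiffSingletons m) ↔ Even m.length := by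
  induction m with
  | nil => simp [symmDiffSingletons]
  | cons i m ih =>
    rw [symmDiffSingletons_cons, even_card_symmDiff_iff, ih, List.length_cons,
      Nat.even_add_one, card_singleton]
    simp

theorem symmDiffSingletons_of_nodup {m : List ι} (h : m.Nodup) :
    symmDiffSingletons m = m.toFinset := by
  induction m with
  | nil => simp [symmDiffSingletons]
  | cons i m ih =>
    rw [List.nodup_cons] at h
    rw [symmDiffSingletons_cons, ih h.2, List.toFinset_cons,
      symmDiff_eq_union (disjoint_singleton_left.2 (by simpa using h.1)), ← insert_eq]

end SymmDiff

section

variable {D ι : Type*}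

theorem exists_list_map_eq_of_forall_mem_image {f : D → ι} {s : Set D} {m : List ι}
    (h : ∀ i ∈ m, i ∈ f '' s) : ∃ l : List D, (∀ x ∈ l, x ∈ s) ∧ l.map f = m := by
  induction m with
  | nil => exact ⟨[], by simp, rfl⟩
  | cons i m ih =>
    obtain ⟨x, hx, rfl⟩ := h _ List.mem_cons_self
    obtain ⟨l, hl, rfl⟩ := ih fun j hj => h j (List.mem_cons_of_mem _ hj)
    exact ⟨x :: l, by simpa [hx] using hl, rfl⟩

theorem forall_sdiff_subset_iff_sdiff_eq {R : Set ι} {u u' : Finset ι} :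
    (∀ v : Finset ι, ((u : Set ι) \ R ⊆ v ∧ (v : Set ι) ∩ R = ∅ ↔
        (u' : Set ι) \ R ⊆ v ∧ (v : Set ι) ∩ R = ∅)) ↔
      (u : Set ι) \ R = ↑u' \ R := by
  classical
  refine ⟨fun h => ?_, fun h v => by rw [h]⟩
  have hw : ∀ w : Finset ι, (↑(w.filter (· ∉ R)) : Set ι) = ↑w \ R := fun w => by
    ext; simp
  have hD : ∀ w : Finset ι, ↑w \ R ⊆ ↑(w.filter (· ∉ R)) ∧ ↑(w.filter (· ∉ R)) ∩ R = ∅ :=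
    fun w => by rw [hw]; exact ⟨subset_rfl, Set.sdiff_inter_self⟩
  apply subset_antisymm
  · simpa only [hw] using ((h _).2 (hD u')).1
  · simpa only [hw] using ((h _).1 (hD u)).1

variable [DecidableEq ι]

theorem foldl_symmDiff_singleton_map (f : D → ι) (l : List D) (u : Finset ι) :
    l.foldl (fun w x => w ∆ {f x}) u = u ∆ symmDiffSingletons (l.map f) := by
  rw [← foldl_symmDiff_singleton, List.foldl_map]

theorem exists_even_list_foldl_symmDiff_iff (f : D → ι) (s : Set D) (u u' : Finset ι) :
    (∃ l : List D, (∀ x ∈ l, x ∈ s) ∧ Even l.length ∧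
        u' = l.foldl (fun w x => w ∆ {f x}) u) ↔
      (u : Set ι) ∆ ↑u' ⊆ f '' s ∧ Even #(u ∆ u') := by
  rw [← coe_symmDiff]
  constructor
  · rintro ⟨l, hl, heven, rfl⟩
    rw [foldl_symmDiff_singleton_map, symmDiff_symmDiff_cancel_left]
    refine ⟨fun i hi => ?_, (even_card_symmDiffSingletons_iff _).2 (by simpa using heven)⟩
    obtain ⟨x, hx, rfl⟩ := List.mem_map.1 (List.mem_toFinset.1 (symmDiffSingletons_subset _ hi))
    exact ⟨x, hl x hx, rfl⟩
  · rintro ⟨hsub, heven⟩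
    obtain ⟨l, hl, hmap⟩ := exists_list_map_eq_of_forall_mem_image (m := (u ∆ u').toList)
      fun i hi => hsub (mem_toList.1 hi)
    refine ⟨l, hl, by rwa [← List.length_map f, hmap, length_toList], ?_⟩
    rw [foldl_symmDiff_singleton_map, hmap,
      symmDiffSingletons_of_nodup (nodup_toList _), toList_toFinset, symmDiff_symmDiff_cancel_left]

theorem even_card_symmDiff_iff_of_sdiff_eq {R : Set ι} {u u' : Finset ι}
    (h : (u : Set ι) \ R = ↑u' \ R) :
    Even #(u ∆ u') ↔ (Odd ((u : Set ι) ∩ R).ncard ↔ Odd ((u' : Set ι) ∩ R).ncard) := by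
  classical
  have hinside : u ∆ u' = u.filter (· ∈ R) ∆ u'.filter (· ∈ R) := by
    ext i
    have := Set.ext_iff.1 h i
    simp only [Set.mem_sdiff, mem_coe] at this
    simp only [mem_symmDiff, mem_filter]
    tauto
  have hcard : ∀ w : Finset ι, ((w : Set ι) ∩ R).ncard = #(w.filter (· ∈ R)) := fun w => by
    rw [← Set.ncard_coe_finset, coe_filter]
    rfl
  rw [hinside, even_card_symmDiff_iff, hcard, hcard, ← Nat.not_even_iff_odd,
    ← Nat.not_even_iff_odd, not_iff_not]

end

/-- in `H₁`, two elements are `E`-equivalent iff they are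
`E'`-equivalent (same `f` and `d`), agree on the parity predicate `P`, and agree
on every difference predicate `D_v`. -/
theorem stmt_6 {D ι : Type} [DecidableEq ι] (lt : D → D → Prop) (a b : Tri D ι) :
    Erel lt a b ↔
      (a.1 = b.1 ∧ a.2.1 = b.2.1) ∧
      (Ppred lt a ↔ Ppred lt b) ∧
      (∀ v : Finset ι, Dpred lt v a ↔ Dpred lt v b) := by
  obtain ⟨f, d, u⟩ := a
  obtain ⟨f', d', u'⟩ := b
  by_cases hfd : f = f' ∧ d = d'
  · obtain ⟨rfl, rfl⟩ := hfd
    have hE : Erel lt (f, d, u) (f, d, u') ↔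
        (u : Set ι) ∆ ↑u' ⊆ ranAbove lt f d ∧ Even #(u ∆ u') :=
      (and_iff_right rfl).trans <| (and_iff_right rfl).trans <|
        exists_even_list_foldl_symmDiff_iff f (cone lt d) u u'
    rw [hE, Set.symmDiff_subset_iff_sdiff_eq]
    simp only [Ppred, Dpred, forall_sdiff_subset_iff_sdiff_eq, true_and]
    exact and_comm.trans (and_congr_left fun h => even_card_symmDiff_iff_of_sdiff_eq h)
  · simp only [Erel]
    tauto
end

section
/- For each d ∈ D, the map g_d sending (f,d',u) to (f,d',u Δ {f(d)}) (for d' ◁ d) flips the parity predicate P, preserves each difference predicate D_v, and preserves the relation R: if (f,d₁,u) R (f',d₁',u') then (f, d₁, u Δ {f(d)}) R (f', d₁', u' Δ {f'(d)}). -/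
open scoped symmDiff

/-! Since `d' ◁ d`, the point `f d` lies in `ran (f ↾ ⌊d'⌋)`: toggling it changes
`|u ∩ ran (f ↾ ⌊d'⌋)|` by one and leaves `u \ ran (f ↾ ⌊d'⌋)` alone. For `R`, toggling `f' d`
in `u'` changes by one the size of exactly one fibre of `e`, the one over `e (f' d) = f d`. -/

namespace Set

variable {α β : Type*}

theorem odd_ncard_symmDiff_singleton_iff {s : Set α} (hs : s.Finite) (x : α) :
    Odd (s ∆ {x}).ncard ↔ ¬ Odd s.ncard := by
  by_cases hx : x ∈ s
  · have hdiff : s ∆ {x} = s \ {x} := by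
      ext i; by_cases hi : i = x <;> simp [mem_symmDiff, hi, hx]
    rw [hdiff, ← ncard_sdiff_singleton_add_one hx hs, Nat.odd_add_one, not_not]
  · have hins : s ∆ {x} = insert x s := by
      ext i; by_cases hi : i = x <;> simp [mem_symmDiff, hi, hx]
    rw [hins, ncard_insert_of_notMem hx hs, Nat.odd_add_one]

theorem symmDiff_singleton_inter_of_mem {s t : Set α} {x : α} (hx : x ∈ t) :
    (s ∆ {x}) ∩ t = (s ∩ t) ∆ {x} := by
  rw [inter_symmDiff_distrib_right, singleton_inter_of_mem hx]

theorem symmDiff_singleton_diff_of_mem {s t : Set α} {x : α} (hx : x ∈ t) :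
    (s ∆ {x}) \ t = s \ t := by
  ext i; by_cases hi : i = x <;> simp [mem_symmDiff, hi, hx]

def oddFibers (e : α → β) (s : Set α) : Set β := {i | Odd (s ∩ e ⁻¹' {i}).ncard}

theorem oddFibers_symmDiff_singleton (e : α → β) {s : Set α} (hs : s.Finite) (y : α) :
    oddFibers e (s ∆ {y}) = oddFibers e s ∆ {e y} := by
  ext i
  change Odd (s ∆ {y} ∩ e ⁻¹' {i}).ncard ↔ i ∈ oddFibers e s ∆ {e y}
  rw [inter_symmDiff_distrib_right]
  by_cases hi : y ∈ e ⁻¹' {i}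
  · rw [singleton_inter_of_mem hi, odd_ncard_symmDiff_singleton_iff (hs.inter_of_left _)]
    have hiy : i = e y := Eq.symm hi
    simp [mem_symmDiff, hiy, oddFibers]
  · rw [singleton_inter_of_notMem hi, ← bot_eq_empty, symmDiff_bot]
    have hiy : i ≠ e y := fun h => hi h.symm
    simp [mem_symmDiff, hiy, oddFibers]

end Set

theorem mem_ranAbove_of_lt {D ι : Type} {lt : D → D → Prop} {d d' : D} (f : D → ι)
    (hd : lt d' d) : f d ∈ ranAbove lt f d' :=
  ⟨d, hd, rfl⟩

section

variable {D ι : Type} [DecidableEq ι] {lt : D → D → Prop} {d d' : D} {f : D → ι} {u : Finset ι}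

theorem Ppred_symmDiff_singleton_iff (hd : lt d' d) :
    Ppred lt (f, d', u ∆ {f d}) ↔ ¬ Ppred lt (f, d', u) := by
  simp only [Ppred, Finset.coe_symmDiff, Finset.coe_singleton,
    Set.symmDiff_singleton_inter_of_mem (mem_ranAbove_of_lt f hd)]
  exact Set.odd_ncard_symmDiff_singleton_iff (u.finite_toSet.inter_of_left _) _

theorem Dpred_symmDiff_singleton_iff (v : Finset ι) (hd : lt d' d) :
    Dpred lt v (f, d', u ∆ {f d}) ↔ Dpred lt v (f, d', u) := by
  simp only [Dpred, Finset.coe_symmDiff, Finset.coe_singleton,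
    Set.symmDiff_singleton_diff_of_mem (mem_ranAbove_of_lt f hd)]

theorem Rrel_symmDiff_singleton {f' : D → ι} {d₁ d₁' : D} {u' : Finset ι}
    (h : Rrel ((f, d₁, u) : Tri D ι) (f', d₁', u')) :
    Rrel ((f, d₁, u ∆ {f d}) : Tri D ι) (f', d₁', u' ∆ {f' d}) := by
  obtain ⟨hle, hfibers⟩ := h
  refine ⟨hle, fun e he => ?_⟩
  have hu : (u : Set ι) = Set.oddFibers e u' := hfibers e he
  have hfd : f d = e (f' d) := congrFun he d
  change ((u ∆ {f d} : Finset ι) : Set ι) = Set.oddFibers e ↑(u' ∆ {f' d})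
  rw [Finset.coe_symmDiff, Finset.coe_symmDiff, Finset.coe_singleton, Finset.coe_singleton, hu, hfd,
    Set.oddFibers_symmDiff_singleton e u'.finite_toSet]

end

/-- for `d ∈ D`, the map `g_d : (f,d',u) ↦ (f,d',u Δ {f d})` (defined
for `d' ◁ d`) flips the parity predicate `P`, preserves each difference predicate
`D_v`, and preserves the relation `R`. -/
theorem stmt_8 {D ι : Type} [DecidableEq ι] (lt : D → D → Prop) (d : D) :
    (∀ (f : D → ι) (d' : D) (u : Finset ι), lt d' d →
      (Ppred lt (f, d', u ∆ ({f d} : Finset ι)) ↔ ¬ Ppred lt (f, d', u))) ∧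
    (∀ (v : Finset ι) (f : D → ι) (d' : D) (u : Finset ι), lt d' d →
      (Dpred lt v (f, d', u ∆ ({f d} : Finset ι)) ↔ Dpred lt v (f, d', u))) ∧
    (∀ (f f' : D → ι) (d₁ d₁' : D) (u u' : Finset ι), lt d₁ d → lt d₁' d →
      Rrel ((f, d₁, u) : Tri D ι) (f', d₁', u') →
      Rrel ((f, d₁, u ∆ ({f d} : Finset ι)) : Tri D ι)
        (f', d₁', u' ∆ ({f' d} : Finset ι))) :=
  ⟨fun _ _ _ hd => Ppred_symmDiff_singleton_iff hd,
    fun v _ _ _ hd => Dpred_symmDiff_singleton_iff v hd,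
    fun _ _ _ _ _ _ _ _ h => Rrel_symmDiff_singleton h⟩
end

section
/- For d₁, d₂ ∈ D with d ◁ d₁ and d ◁ d₂, the composition g_{d₁} ∘ g_{d₂}, where g_{d'}(f,d'',u) = (f,d'',u Δ {f(d')}), is an automorphism of the structure H_{1,d}: it preserves π, E', E, P, each D_v, each F_c, and R. -/
open scoped symmDiff

/-- The map `g_{d'} : (f,d'',u) ↦ (f,d'',u Δ {f d'})`. -/
def gmap {D ι : Type} [DecidableEq ι] (d' : D) (t : Tri D ι) : Tri D ι :=
  (t.1, t.2.1, t.2.2 ∆ ({t.1 d'} : Finset ι))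

/-!
Each `g_{d'}` only replaces `u` by `u Δ {f d'}`. Hence it commutes with every `F_c`, preserves
`E` (the defining chains just shift by `{f d'}`) and preserves `R`: if `f = e ∘ f'` then
`f d' = e (f' d')`, so the mod-2 image of `u' Δ {f' d'}` under `e` is that of `u'` Δ `{f d'}`.
At a triple `(f, d'', u)` with `d'' ◁ d'` the point `f d'` lies in `ran (f ↾ ⌊d''⌋)`, so
`g_{d'}` fixes `D_v` and flips `P`. For `d'' ◁ d` transitivity gives `d'' ◁ d₁` and `d'' ◁ d₂`,
and the two flips of `P` cancel.
-/

namespace Set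

variable {α β : Type*}

theorem odd_ncard_symmDiff_singleton_iff_s11 {t : Set α} (ht : t.Finite) (x : α) :
    Odd (t ∆ {x}).ncard ↔ ¬ Odd t.ncard := by
  by_cases hx : x ∈ t
  · have hpos : 0 < t.ncard := (ncard_pos ht).mpr ⟨x, hx⟩
    rw [symmDiff_of_ge (singleton_subset_iff.mpr hx), ncard_sdiff_singleton_of_mem hx,
      Nat.odd_iff, Nat.odd_iff]
    omega
  · have hins : t ∆ {x} = insert x t := by
      rw [(disjoint_singleton_right.mpr hx).symmDiff_eq_sup]; exact union_singleton
    rw [hins, ncard_insert_of_notMem hx ht, Nat.odd_iff, Nat.odd_iff]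
    omega

theorem odd_ncard_symmDiff_singleton_inter_iff {u S : Set α} (hu : u.Finite) {x : α}
    (hx : x ∈ S) : Odd ((u ∆ {x}) ∩ S).ncard ↔ ¬ Odd (u ∩ S).ncard := by
  rw [inter_symmDiff_distrib_right, inter_eq_left.mpr (singleton_subset_iff.mpr hx)]
  exact odd_ncard_symmDiff_singleton_iff_s11 (hu.inter_of_left S) x

theorem symmDiff_singleton_inter_of_notMem {u S : Set α} {x : α} (hx : x ∉ S) :
    (u ∆ {x}) ∩ S = u ∩ S := by
  rw [inter_symmDiff_distrib_right, singleton_inter_eq_empty.mpr hx]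
  exact symmDiff_bot _

theorem symmDiff_diff_of_subset {A B S : Set α} (hB : B ⊆ S) : (A ∆ B) \ S = A \ S := by
  rw [sdiff_eq, sdiff_eq, inter_symmDiff_distrib_right, ← sdiff_eq, ← sdiff_eq,
    sdiff_eq_empty.mpr hB]
  exact symmDiff_bot _

def modTwoImage (e : α → β) (s : Set α) : Set β :=
  {i | Odd (s ∩ e ⁻¹' {i}).ncard}

theorem modTwoImage_symmDiff_singleton {s : Set α} (hs : s.Finite) (e : α → β) (x : α) :
    modTwoImage e (s ∆ {x}) = modTwoImage e s ∆ {e x} := by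
  ext i
  by_cases h : e x = i
  · simp [modTwoImage, odd_ncard_symmDiff_singleton_inter_iff hs (show x ∈ e ⁻¹' {i} from h),
      mem_symmDiff, h]
  · simp [modTwoImage, symmDiff_singleton_inter_of_notMem (show x ∉ e ⁻¹' {i} from h),
      mem_symmDiff, Ne.symm h]

end Set

theorem List.foldl_symmDiff_right_comm {D α : Type*} [GeneralizedBooleanAlgebra α] (g : D → α)
    (l : List D) (u s : α) :
    l.foldl (fun w x => w ∆ g x) (u ∆ s) = l.foldl (fun w x => w ∆ g x) u ∆ s := by
  induction l generalizing u with
  | nil => rfl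
  | cons a l ih => rw [List.foldl_cons, List.foldl_cons, symmDiff_right_comm, ih]

theorem apply_mem_ranAbove {D ι : Type} (lt : D → D → Prop) (f : D → ι) {d'' d' : D}
    (h : lt d'' d') : f d' ∈ ranAbove lt f d'' :=
  ⟨d', h, rfl⟩

section gmap

variable {D ι : Type} [DecidableEq ι] (lt : D → D → Prop) (d' : D)

theorem erel_gmap_iff (a b : Tri D ι) : Erel lt (gmap d' a) (gmap d' b) ↔ Erel lt a b := by
  refine and_congr_right fun hf => and_congr_right fun _ =>
    exists_congr fun l => and_congr_right fun _ => and_congr_right fun _ => ?_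
  change a.1 = b.1 at hf
  change b.2.2 ∆ {b.1 d'} = l.foldl (fun w x => w ∆ {a.1 x}) (a.2.2 ∆ {a.1 d'}) ↔
    b.2.2 = l.foldl (fun w x => w ∆ {a.1 x}) a.2.2
  rw [List.foldl_symmDiff_right_comm, hf, symmDiff_left_inj]

theorem ppred_gmap_iff {t : Tri D ι} (h : lt t.2.1 d') :
    Ppred lt (gmap d' t) ↔ ¬ Ppred lt t := by
  unfold Ppred gmap
  rw [Finset.coe_symmDiff, Finset.coe_singleton]
  exact Set.odd_ncard_symmDiff_singleton_inter_iff t.2.2.finite_toSet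
    (apply_mem_ranAbove lt t.1 h)

theorem dpred_gmap_iff (v : Finset ι) {t : Tri D ι} (h : lt t.2.1 d') :
    Dpred lt v (gmap d' t) ↔ Dpred lt v t := by
  unfold Dpred gmap
  dsimp only
  rw [Finset.coe_symmDiff, Finset.coe_singleton,
    Set.symmDiff_diff_of_subset (Set.singleton_subset_iff.mpr (apply_mem_ranAbove lt t.1 h))]

theorem gmap_fc (c : Finset ι) (t : Tri D ι) : gmap d' (Fc c t) = Fc c (gmap d' t) := by
  simp only [gmap, Fc, symmDiff_right_comm]

theorem rrel_gmap_iff (a b : Tri D ι) : Rrel (gmap d' a) (gmap d' b) ↔ Rrel a b := by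
  refine and_congr_right fun _ => forall_congr' fun e => forall_congr' fun he => ?_
  change a.1 = e ∘ b.1 at he
  change ((a.2.2 ∆ {a.1 d'} : Finset ι) : Set ι) = Set.modTwoImage e ↑(b.2.2 ∆ {b.1 d'}) ↔
    (a.2.2 : Set ι) = Set.modTwoImage e ↑b.2.2
  rw [Finset.coe_symmDiff, Finset.coe_symmDiff, Finset.coe_singleton, Finset.coe_singleton,
    Set.modTwoImage_symmDiff_singleton b.2.2.finite_toSet, congrFun he d', Function.comp_apply,
    symmDiff_left_inj]

end gmap

/-- for `d ◁ d₁` and `d ◁ d₂`, the composition `g_{d₁} ∘ g_{d₂}` is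
an automorphism of `H_{1,d}` (whose universe consists of triples `(f,d'',u)` with
`d'' ◁ d`): it preserves `π`, `E'`, `E`, `P`, each `D_v`, each `F_c`, and `R`. -/
theorem stmt_11 {D ι : Type} [DecidableEq ι] (lt : D → D → Prop)
    (htrans : ∀ a b c, lt a b → lt b c → lt a c)
    (d d₁ d₂ : D) (h₁ : lt d d₁) (h₂ : lt d d₂) :
    (∀ t : Tri D ι, lt t.2.1 d →
      ((gmap d₁ (gmap d₂ t)).1 = t.1 ∧ (gmap d₁ (gmap d₂ t)).2.1 = t.2.1)) ∧
    (∀ a b : Tri D ι, lt a.2.1 d → lt b.2.1 d →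
      ((a.1 = b.1 ∧ a.2.1 = b.2.1) ↔
        ((gmap d₁ (gmap d₂ a)).1 = (gmap d₁ (gmap d₂ b)).1 ∧
         (gmap d₁ (gmap d₂ a)).2.1 = (gmap d₁ (gmap d₂ b)).2.1))) ∧
    (∀ a b : Tri D ι, lt a.2.1 d → lt b.2.1 d →
      (Erel lt a b ↔ Erel lt (gmap d₁ (gmap d₂ a)) (gmap d₁ (gmap d₂ b)))) ∧
    (∀ t : Tri D ι, lt t.2.1 d →
      (Ppred lt t ↔ Ppred lt (gmap d₁ (gmap d₂ t)))) ∧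
    (∀ (v : Finset ι) (t : Tri D ι), lt t.2.1 d →
      (Dpred lt v t ↔ Dpred lt v (gmap d₁ (gmap d₂ t)))) ∧
    (∀ (c : Finset ι) (t : Tri D ι), lt t.2.1 d →
      gmap d₁ (gmap d₂ (Fc c t)) = Fc c (gmap d₁ (gmap d₂ t))) ∧
    (∀ a b : Tri D ι, lt a.2.1 d → lt b.2.1 d →
      (Rrel a b ↔ Rrel (gmap d₁ (gmap d₂ a)) (gmap d₁ (gmap d₂ b)))) := by
  have below₁ : ∀ t : Tri D ι, lt t.2.1 d → lt (gmap d₂ t).2.1 d₁ := fun _ ht =>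
    htrans _ _ _ ht h₁
  have below₂ : ∀ t : Tri D ι, lt t.2.1 d → lt t.2.1 d₂ := fun _ ht => htrans _ _ _ ht h₂
  refine ⟨fun _ _ => ⟨rfl, rfl⟩, fun _ _ _ _ => Iff.rfl, fun a b _ _ => ?_, fun t ht => ?_,
    fun v t ht => ?_, fun c t _ => ?_, fun a b _ _ => ?_⟩
  · rw [erel_gmap_iff, erel_gmap_iff]
  · rw [ppred_gmap_iff lt d₁ (below₁ t ht), ppred_gmap_iff lt d₂ (below₂ t ht), not_not]
  · rw [dpred_gmap_iff lt d₁ v (below₁ t ht), dpred_gmap_iff lt d₂ v (below₂ t ht)]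
  · rw [gmap_fc, gmap_fc]
  · rw [rrel_gmap_iff, rrel_gmap_iff]
end

section
/- Suppose F is countably closed under ≤ (every ≤-increasing ω-sequence has an upper bound) and for each f ∈ F there is a nonempty finite set u_f such that whenever f ≤ f' with witness e, u_f ⊆ e''(u_{f'}) (hence |u_f| ≤ |u_{f'}|). Then there exists f* ∈ F such that |u_f| = |u_{f*}| for all f ≥ f*; moreover, for such f, if e witnesses f* ≤ f, then e restricted to u_f is a bijection onto u_{f*}. -/
open Finset

theorem Finset.bijOn_of_surjOn_of_card_le {α β : Type*} [DecidableEq β] {f : α → β}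
    {s : Finset α} {t : Finset β} (hf : Set.SurjOn f s t) (hst : #s ≤ #t) :
    Set.BijOn f s t := by
  have himage : t = s.image f :=
    eq_of_subset_of_card_le (surjOn_iff_subset_image.1 hf) (card_image_le.trans hst)
  exact (image_eq_iff_bijOn_of_card hst).1 himage.symm

theorem exists_forall_le_of_seq_bounded {α : Type*} {S : Set α} (hS : S.Nonempty)
    (r : α → α → Prop) (c : α → ℕ) (hc : ∀ a ∈ S, ∀ b ∈ S, r a b → c a ≤ c b)
    (hbdd : ∀ g : ℕ → α, (∀ n, g n ∈ S) → (∀ n, r (g n) (g (n + 1))) →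
      ∃ b ∈ S, ∀ n, r (g n) b) :
    ∃ a ∈ S, ∀ b ∈ S, r a b → c b ≤ c a := by
  by_contra! hnext
  choose! next hnextS hr hlt using hnext
  obtain ⟨a, ha⟩ := hS
  have hgS : ∀ n, next^[n] a ∈ S := fun n => Set.MapsTo.iterate hnextS n ha
  have hgr : ∀ n, r (next^[n] a) (next^[n + 1] a) := fun n => by
    rw [Function.iterate_succ_apply']
    exact hr _ (hgS n)
  have hgrow : ∀ n, n ≤ c (next^[n] a) := by
    intro n
    induction n with
    | zero => exact Nat.zero_le _
    | succ k ih =>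
      rw [Function.iterate_succ_apply']
      exact ih.trans_lt (hlt _ (hgS k))
  obtain ⟨b, hb, hgb⟩ := hbdd (fun n => next^[n] a) hgS hgr
  have := hc _ (hgS (c b + 1)) b hb (hgb (c b + 1))
  have := hgrow (c b + 1)
  omega

theorem stmt_13_general {D ι : Type} (F : Set (D → ι)) (hne : F.Nonempty)
    (hcc : ∀ g : ℕ → (D → ι), (∀ n, g n ∈ F) → (∀ n, FLe (g n) (g (n + 1))) →
      ∃ f ∈ F, ∀ n, FLe (g n) f)
    (u : (D → ι) → Finset ι)
    (hmono : ∀ f ∈ F, ∀ f' ∈ F, ∀ e : ι → ι, f = e ∘ f' →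
      (↑(u f) : Set ι) ⊆ e '' ↑(u f')) :
    ∃ fs ∈ F, ∀ f ∈ F, FLe fs f →
      (u f).card = (u fs).card ∧
      ∀ e : ι → ι, fs = e ∘ f → Set.BijOn e ↑(u f) ↑(u fs) := by
  classical
  have hcard : ∀ f ∈ F, ∀ f' ∈ F, FLe f f' → #(u f) ≤ #(u f') :=
    fun f hf f' hf' ⟨e, he⟩ => card_le_card_of_surjOn e (hmono f hf f' hf' e he)
  obtain ⟨fs, hfs, hmax⟩ := exists_forall_le_of_seq_bounded hne FLe (fun f => #(u f)) hcard hcc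
  refine ⟨fs, hfs, fun f hf hle => ?_⟩
  have hcard_eq : #(u f) = #(u fs) := le_antisymm (hmax f hf hle) (hcard fs hfs f hf hle)
  exact ⟨hcard_eq, fun e he =>
    bijOn_of_surjOn_of_card_le (hmono fs hfs f hf e he) hcard_eq.le⟩

/-- if `F` is countably closed and each `f ∈ F` carries a nonempty
finite set `u f` with `u f ⊆ e '' (u f')` whenever `e` witnesses `f ≤ f'`, then
there is `f* ∈ F` with `|u f| = |u f*|` for all `f ≥ f*` in `F`; moreover for such
`f`, any witness `e` of `f* ≤ f` restricts to a bijection from `u f` onto `u f*`. -/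
theorem stmt_13 {D ι : Type} (F : Set (D → ι)) (hne : F.Nonempty)
    (hdir : ∀ f₁ ∈ F, ∀ f₂ ∈ F, ∃ f₃ ∈ F, FLe f₁ f₃ ∧ FLe f₂ f₃)
    (hcc : ∀ g : ℕ → (D → ι), (∀ n, g n ∈ F) → (∀ n, FLe (g n) (g (n + 1))) →
      ∃ f ∈ F, ∀ n, FLe (g n) f)
    (u : (D → ι) → Finset ι)
    (hune : ∀ f ∈ F, (u f).Nonempty)
    (hmono : ∀ f ∈ F, ∀ f' ∈ F, ∀ e : ι → ι, f = e ∘ f' →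
      (↑(u f) : Set ι) ⊆ e '' ↑(u f')) :
    ∃ fs ∈ F, ∀ f ∈ F, FLe fs f →
      (u f).card = (u fs).card ∧
      ∀ e : ι → ι, fs = e ∘ f → Set.BijOn e ↑(u f) ↑(u fs) :=
  stmt_13_general F hne hcc u hmono
end

section
/- The abstract elementary class K_σ admits intersections: for every M ∈ K_σ and X ⊆ M, the intersection of all substructures of M (in K_σ) containing X is itself a substructure of M belonging to K_σ. -/
/-! The intersection is `M` with its sorts cut down, so all universal axioms of `K_σ` hold
in it, and closure under `π`, `Q` and the `F_c` passes from the members to the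
intersection. For the realization axiom: a `K_σ`-substructure that meets a `π`-fiber of `M`
contains all of it, since `G` acts transitively on the fiber; hence the point of `M`
realizing `(i, j)` lies in every member. -/

open scoped symmDiff

/-- An `L_σ`-structure: sorts `A ⊆ 𝔸`, `I ⊆ 𝕀`, `J ⊆ 𝕁` inside ambient types,
functions `π : A → I`, `Q : A → J`, `F_c : A → A` for `c` in the group `G` of
finite subsets of `X` under symmetric difference, and relations `P, D_c ⊆ A`
and `E', E, R ⊆ A²`. -/
structure KStr (X 𝔸 𝕀 𝕁 : Type) [DecidableEq X] where
  A : Set 𝔸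
  I : Set 𝕀
  J : Set 𝕁
  map : 𝔸 → 𝕀          -- π
  Q : 𝔸 → 𝕁
  Fc : Finset X → 𝔸 → 𝔸
  P : Set 𝔸
  Dc : Finset X → Set 𝔸
  E' : 𝔸 → 𝔸 → Prop
  E : 𝔸 → 𝔸 → Prop
  R : 𝔸 → 𝔸 → Prop

variable {X 𝔸 𝕀 𝕁 : Type} [DecidableEq X]

/-- Membership in the class `K_σ`: (0) sorts are respected; (1) `{F_c : c ∈ G}`
is a 1-transitive (i.e. simply transitive) action of `G` on each fiber
`π⁻¹{i}`; (2) `E'` and `E` are equivalence relations on `A` with `a E' b` iff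
`π a = π b`; (3) every `(i, j) ∈ I × J` is realized. -/
def InK (M : KStr X 𝔸 𝕀 𝕁) : Prop :=
  (∀ a ∈ M.A, M.map a ∈ M.I) ∧
  (∀ a ∈ M.A, M.Q a ∈ M.J) ∧
  (∀ (c : Finset X), ∀ a ∈ M.A, M.Fc c a ∈ M.A ∧ M.map (M.Fc c a) = M.map a) ∧
  (∀ a ∈ M.A, M.Fc ∅ a = a) ∧
  (∀ (c c' : Finset X), ∀ a ∈ M.A, M.Fc c (M.Fc c' a) = M.Fc (c ∆ c') a) ∧
  (∀ a ∈ M.A, ∀ b ∈ M.A, M.map a = M.map b → ∃! c : Finset X, M.Fc c a = b) ∧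
  (∀ a ∈ M.A, M.E' a a) ∧
  (∀ a ∈ M.A, ∀ b ∈ M.A, M.E' a b → M.E' b a) ∧
  (∀ a ∈ M.A, ∀ b ∈ M.A, ∀ c ∈ M.A, M.E' a b → M.E' b c → M.E' a c) ∧
  (∀ a ∈ M.A, M.E a a) ∧
  (∀ a ∈ M.A, ∀ b ∈ M.A, M.E a b → M.E b a) ∧
  (∀ a ∈ M.A, ∀ b ∈ M.A, ∀ c ∈ M.A, M.E a b → M.E b c → M.E a c) ∧
  (∀ a ∈ M.A, ∀ b ∈ M.A, (M.E' a b ↔ M.map a = M.map b)) ∧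
  (∀ i ∈ M.I, ∀ j ∈ M.J, ∃ a ∈ M.A, M.map a = i ∧ M.Q a = j)

/-- `N` is an `L_σ`-substructure of `M`. -/
def Substr (N M : KStr X 𝔸 𝕀 𝕁) : Prop :=
  N.A ⊆ M.A ∧ N.I ⊆ M.I ∧ N.J ⊆ M.J ∧
  Set.EqOn N.map M.map N.A ∧ Set.EqOn N.Q M.Q N.A ∧
  (∀ c : Finset X, Set.EqOn (N.Fc c) (M.Fc c) N.A) ∧
  (∀ a ∈ N.A, (a ∈ N.P ↔ a ∈ M.P)) ∧
  (∀ c : Finset X, ∀ a ∈ N.A, (a ∈ N.Dc c ↔ a ∈ M.Dc c)) ∧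
  (∀ a ∈ N.A, ∀ b ∈ N.A,
    (N.E' a b ↔ M.E' a b) ∧ (N.E a b ↔ M.E a b) ∧ (N.R a b ↔ M.R a b))

def KStr.restrict (M : KStr X 𝔸 𝕀 𝕁) (A : Set 𝔸) (I : Set 𝕀) (J : Set 𝕁) :
    KStr X 𝔸 𝕀 𝕁 :=
  { M with A := A, I := I, J := J }

theorem Substr.refl (M : KStr X 𝔸 𝕀 𝕁) : Substr M M :=
  ⟨subset_rfl, subset_rfl, subset_rfl, fun _ _ => rfl, fun _ _ => rfl,
    fun _ _ _ => rfl, fun _ _ => Iff.rfl, fun _ _ _ => Iff.rfl,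
    fun _ _ _ _ => ⟨Iff.rfl, Iff.rfl, Iff.rfl⟩⟩

theorem KStr.substr_restrict {M : KStr X 𝔸 𝕀 𝕁} {A : Set 𝔸} {I : Set 𝕀} {J : Set 𝕁}
    (hA : A ⊆ M.A) (hI : I ⊆ M.I) (hJ : J ⊆ M.J) : Substr (M.restrict A I J) M :=
  ⟨hA, hI, hJ, fun _ _ => rfl, fun _ _ => rfl, fun _ _ _ => rfl,
    fun _ _ => Iff.rfl, fun _ _ _ => Iff.rfl, fun _ _ _ _ => ⟨Iff.rfl, Iff.rfl, Iff.rfl⟩⟩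

/-- All axioms of `K_σ` except the closure and realization conditions are universal,
so they pass to any subset of `M.A`. -/
theorem InK.restrict {M : KStr X 𝔸 𝕀 𝕁} (hM : InK M) {A : Set 𝔸} {I : Set 𝕀} {J : Set 𝕁}
    (hA : A ⊆ M.A) (hmap : ∀ a ∈ A, M.map a ∈ I) (hQ : ∀ a ∈ A, M.Q a ∈ J)
    (hFc : ∀ (c : Finset X), ∀ a ∈ A, M.Fc c a ∈ A)
    (hreal : ∀ i ∈ I, ∀ j ∈ J, ∃ a ∈ A, M.map a = i ∧ M.Q a = j) :
    InK (M.restrict A I J) := by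
  obtain ⟨-, -, hclos, hid, hcomp, htrans, hE'r, hE's, hE't, hEr, hEs, hEt, hE'map, -⟩ := hM
  exact ⟨hmap, hQ, fun c a ha => ⟨hFc c a ha, (hclos c a (hA ha)).2⟩,
    fun a ha => hid a (hA ha),
    fun c c' a ha => hcomp c c' a (hA ha),
    fun a ha b hb => htrans a (hA ha) b (hA hb),
    fun a ha => hE'r a (hA ha),
    fun a ha b hb => hE's a (hA ha) b (hA hb),
    fun a ha b hb c hc => hE't a (hA ha) b (hA hb) c (hA hc),
    fun a ha => hEr a (hA ha),
    fun a ha b hb => hEs a (hA ha) b (hA hb),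
    fun a ha b hb c hc => hEt a (hA ha) b (hA hb) c (hA hc),
    fun a ha b hb => hE'map a (hA ha) b (hA hb),
    hreal⟩

theorem InK.exists_map_eq_Q_eq {M : KStr X 𝔸 𝕀 𝕁} (hM : InK M) {i : 𝕀} {j : 𝕁}
    (hi : i ∈ M.I) (hj : j ∈ M.J) : ∃ a ∈ M.A, M.map a = i ∧ M.Q a = j :=
  hM.2.2.2.2.2.2.2.2.2.2.2.2.2 i hi j hj

section Substr

variable {N M : KStr X 𝔸 𝕀 𝕁}

theorem Substr.map_mem (hN : InK N) (h : Substr N M) {a : 𝔸} (ha : a ∈ N.A) :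
    M.map a ∈ N.I :=
  h.2.2.2.1 ha ▸ hN.1 a ha

theorem Substr.Q_mem (hN : InK N) (h : Substr N M) {a : 𝔸} (ha : a ∈ N.A) :
    M.Q a ∈ N.J :=
  h.2.2.2.2.1 ha ▸ hN.2.1 a ha

theorem Substr.Fc_mem (hN : InK N) (h : Substr N M) (c : Finset X) {a : 𝔸}
    (ha : a ∈ N.A) : M.Fc c a ∈ N.A :=
  h.2.2.2.2.2.1 c ha ▸ (hN.2.2.1 c a ha).1

/-- The `M`-fiber of `π` through `a` is the orbit of `a` under the `F_c`, under which `N` is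
closed. -/
theorem Substr.mem_of_map_eq (hM : InK M) (hN : InK N) (h : Substr N M) {a b : 𝔸}
    (ha : a ∈ N.A) (hb : b ∈ M.A) (hab : M.map a = M.map b) : b ∈ N.A := by
  obtain ⟨c, rfl, -⟩ := hM.2.2.2.2.2.1 a (h.1 ha) b hb hab
  exact h.Fc_mem hN c ha

end Substr

theorem InK.restrict_iInter {M : KStr X 𝔸 𝕀 𝕁} (hM : InK M) {S : Set (KStr X 𝔸 𝕀 𝕁)}
    (hS : ∀ N ∈ S, InK N ∧ Substr N M) (hne : S.Nonempty) :
    InK (M.restrict (⋂ N ∈ S, N.A) (⋂ N ∈ S, N.I) (⋂ N ∈ S, N.J)) := by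
  obtain ⟨N₀, hN₀⟩ := hne
  refine hM.restrict (fun a ha => (hS N₀ hN₀).2.1 (Set.mem_iInter₂.1 ha N₀ hN₀))
    (fun a ha => Set.mem_iInter₂.2 fun N hN =>
      (hS N hN).2.map_mem (hS N hN).1 (Set.mem_iInter₂.1 ha N hN))
    (fun a ha => Set.mem_iInter₂.2 fun N hN =>
      (hS N hN).2.Q_mem (hS N hN).1 (Set.mem_iInter₂.1 ha N hN))
    (fun c a ha => Set.mem_iInter₂.2 fun N hN =>
      (hS N hN).2.Fc_mem (hS N hN).1 c (Set.mem_iInter₂.1 ha N hN)) ?_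
  intro i hi j hj
  rw [Set.mem_iInter₂] at hi hj
  obtain ⟨a, haM, rfl, rfl⟩ :=
    hM.exists_map_eq_Q_eq ((hS N₀ hN₀).2.2.1 (hi N₀ hN₀)) ((hS N₀ hN₀).2.2.2.1 (hj N₀ hN₀))
  refine ⟨a, Set.mem_iInter₂.2 fun N hN => ?_, rfl, rfl⟩
  obtain ⟨hNK, hsub⟩ := hS N hN
  obtain ⟨a', ha', hmap, -⟩ := hNK.exists_map_eq_Q_eq (hi N hN) (hj N hN)
  exact hsub.mem_of_map_eq hM hNK ha' haM (hsub.2.2.2.1 ha' ▸ hmap)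

theorem Substr.restrict_iInter {M : KStr X 𝔸 𝕀 𝕁} {S : Set (KStr X 𝔸 𝕀 𝕁)}
    (hMS : M ∈ S) : Substr (M.restrict (⋂ N ∈ S, N.A) (⋂ N ∈ S, N.I) (⋂ N ∈ S, N.J)) M :=
  KStr.substr_restrict (Set.biInter_subset_of_mem hMS) (Set.biInter_subset_of_mem hMS)
    (Set.biInter_subset_of_mem hMS)

/-- `K_σ` admits intersections: for every `M ∈ K_σ` and subset
`(SA, SI, SJ)` of its universe, the intersection of all substructures of `M`
belonging to `K_σ` that contain the subset is itself a substructure of `M`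
belonging to `K_σ`. -/
theorem stmt_15 (M : KStr X 𝔸 𝕀 𝕁) (hM : InK M)
    (SA : Set 𝔸) (SI : Set 𝕀) (SJ : Set 𝕁)
    (hSA : SA ⊆ M.A) (hSI : SI ⊆ M.I) (hSJ : SJ ⊆ M.J) :
    ∃ N : KStr X 𝔸 𝕀 𝕁,
      (N.A = ⋂ N' ∈ {N' : KStr X 𝔸 𝕀 𝕁 |
        InK N' ∧ Substr N' M ∧ SA ⊆ N'.A ∧ SI ⊆ N'.I ∧ SJ ⊆ N'.J}, N'.A) ∧
      (N.I = ⋂ N' ∈ {N' : KStr X 𝔸 𝕀 𝕁 |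
        InK N' ∧ Substr N' M ∧ SA ⊆ N'.A ∧ SI ⊆ N'.I ∧ SJ ⊆ N'.J}, N'.I) ∧
      (N.J = ⋂ N' ∈ {N' : KStr X 𝔸 𝕀 𝕁 |
        InK N' ∧ Substr N' M ∧ SA ⊆ N'.A ∧ SI ⊆ N'.I ∧ SJ ⊆ N'.J}, N'.J) ∧
      InK N ∧ Substr N M := by
  set S := {N' : KStr X 𝔸 𝕀 𝕁 |
    InK N' ∧ Substr N' M ∧ SA ⊆ N'.A ∧ SI ⊆ N'.I ∧ SJ ⊆ N'.J}
  have hMS : M ∈ S := ⟨hM, Substr.refl M, hSA, hSI, hSJ⟩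
  exact ⟨_, rfl, rfl, rfl,
    hM.restrict_iInter (fun N hN => ⟨hN.1, hN.2.1⟩) ⟨M, hMS⟩, Substr.restrict_iInter hMS⟩
end

section
/- If κ has uncountable cofinality and σ^ω = σ, then the family F = {f : κ → σ} of all functions from κ to σ is countably closed under the ordering f₁ ≤ f₂ iff ∃e with f₁ = e ∘ f₂: every ≤-increasing ω-sequence ⟨f_n⟩ in F has an upper bound f ∈ F. -/
theorem Cardinal.nonempty_nat_arrow_equiv_of_power_aleph0 {α : Type*}
    (h : Cardinal.mk α ^ Cardinal.aleph0 = Cardinal.mk α) : Nonempty ((ℕ → α) ≃ α) := by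
  refine Cardinal.eq.mp ?_
  rw [Cardinal.mk_arrow, Cardinal.mk_nat, Cardinal.lift_aleph0, Cardinal.lift_uzero, h]

theorem FLe_of_nat_arrow_equiv {D ι : Type} (e : (ℕ → ι) ≃ ι) (fs : ℕ → D → ι) (n : ℕ) :
    FLe (fs n) (fun x => e (fun m => fs m x)) :=
  ⟨fun s => e.symm s n, by funext x; simp⟩

theorem stmt_18_general (κ σ : Cardinal)
    (hσ : σ ^ Cardinal.aleph0 = σ)
    (fs : ℕ → (κ.ord.ToType → σ.ord.ToType)) :
    ∃ g : κ.ord.ToType → σ.ord.ToType, ∀ n, FLe (fs n) g := by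
  obtain ⟨e⟩ := Cardinal.nonempty_nat_arrow_equiv_of_power_aleph0
    (α := σ.ord.ToType) (by rwa [Cardinal.mk_ord_toType])
  exact ⟨_, FLe_of_nat_arrow_equiv e fs⟩

/-- if `κ` has uncountable cofinality and `σ^ω = σ`, then the
family of all functions from `κ` to `σ` is countably closed under `≤`: every
`≤`-increasing `ω`-sequence has an upper bound. -/
theorem stmt_18 (κ σ : Cardinal)
    (hcof : Cardinal.aleph0 < κ.ord.cof)
    (hσ : σ ^ Cardinal.aleph0 = σ)
    (fs : ℕ → (κ.ord.ToType → σ.ord.ToType))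
    (hinc : ∀ n, FLe (fs n) (fs (n + 1))) :
    ∃ g : κ.ord.ToType → σ.ord.ToType, ∀ n, FLe (fs n) g :=
  stmt_18_general κ σ hσ fs
end
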